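/- arXiv:2602.14455 — 2 statements merged into one kernel-verified Lean document; each statement's English description precedes it below -/
import Mathlib

section
/- Let Z be a real random variable with E[Z] = 0 and E[|Z|³] < ∞, and define ω(u) = E[Z·1{Z ≥ u}] for u ∈ ℝ. Then the function u ↦ u·ω(u) is Lebesgue integrable on ℝ and ∫_ℝ u·ω(u) du = E[Z³]/2. In particular, if Z has the same distribution as −Z (i.e., Z is symmetrically distributed), then ∫_ℝ u·ω(u) du = 0, so a linear local projection's weighted average annihilates any second-order (quadratic) component of the marginal effect. -/
/-!
Since `E[Z] = 0`, subtracting `u · 1{u ≤ 0} · E[Z]` gives `u · ω(u) = E[Z · L(Z, u)]` with the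
kernel `L(z, u) = u (1{u ≤ z} - 1{u ≤ 0})`. This kernel is nonnegative and `∫ L(z, u) du = z² / 2`,
so `E[|Z|³] < ∞` makes `(ω, u) ↦ Z ω · L(Z ω, u)` integrable and Fubini gives
`∫ u ω(u) du = E[Z · Z² / 2]`. For symmetric `Z` this vanishes because `x ↦ x³` is odd.
-/

open MeasureTheory

noncomputable def signedLayer (z u : ℝ) : ℝ :=
  u * ((if u ≤ z then 1 else 0) - (if u ≤ 0 then 1 else 0))

lemma signedLayer_nonneg (z u : ℝ) : 0 ≤ signedLayer z u := by
  unfold signedLayer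
  split_ifs <;> nlinarith

lemma signedLayer_eq_indicator_sub_indicator (z : ℝ) :
    signedLayer z = (Set.Ioc 0 z).indicator id - (Set.Ioc z 0).indicator id := by
  ext u
  simp only [signedLayer, Pi.sub_apply, Set.indicator_apply, Set.mem_Ioc, id]
  split_ifs <;> grind

lemma measurable_signedLayer : Measurable (Function.uncurry signedLayer) := by
  refine measurable_snd.mul (Measurable.sub ?_ ?_) <;>
    exact Measurable.ite (measurableSet_le measurable_snd (by fun_prop)) measurable_const
      measurable_const

lemma integrable_indicator_Ioc_id (a b : ℝ) : Integrable ((Set.Ioc a b).indicator id) :=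
  (integrable_indicator_iff measurableSet_Ioc).2 continuous_id.integrableOn_Ioc

lemma integrable_signedLayer (z : ℝ) : Integrable (signedLayer z) := by
  rw [signedLayer_eq_indicator_sub_indicator]
  exact (integrable_indicator_Ioc_id 0 z).sub (integrable_indicator_Ioc_id z 0)

lemma integral_signedLayer (z : ℝ) : ∫ u, signedLayer z u = z ^ 2 / 2 := by
  rw [signedLayer_eq_indicator_sub_indicator,
    integral_sub' (integrable_indicator_Ioc_id 0 z) (integrable_indicator_Ioc_id z 0),
    integral_indicator measurableSet_Ioc, integral_indicator measurableSet_Ioc]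
  -- the difference of the two set integrals is the interval integral `∫ u in 0..z, u`
  exact (integral_id : ∫ u in (0 : ℝ)..z, u = _).trans (by ring)

lemma integral_norm_mul_signedLayer (z : ℝ) : ∫ u, ‖z * signedLayer z u‖ = |z| ^ 3 / 2 := by
  simp_rw [norm_mul, Real.norm_of_nonneg (signedLayer_nonneg z _), Real.norm_eq_abs]
  rw [integral_const_mul, integral_signedLayer, ← sq_abs z]
  ring

section

variable {Ω : Type*} [MeasurableSpace Ω] {P : Measure Ω} {X : Ω → ℝ}

lemma Function.Odd.integral_comp_eq_zero_of_map_neg_eq {f : ℝ → ℝ} (hodd : f.Odd)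
    (hf : Measurable f) (hX : Measurable X) (hsymm : P.map X = P.map (fun ω => -X ω)) :
    ∫ ω, f (X ω) ∂P = 0 := by
  have h : ∫ ω, f (X ω) ∂P = -∫ ω, f (X ω) ∂P := calc
    ∫ ω, f (X ω) ∂P = ∫ x, f x ∂P.map X :=
      (integral_map hX.aemeasurable hf.aestronglyMeasurable).symm
    _ = ∫ ω, f (-X ω) ∂P := by
      rw [hsymm, integral_map (φ := fun ω => -X ω) hX.neg.aemeasurable hf.aestronglyMeasurable]
    _ = -∫ ω, f (X ω) ∂P := by simp_rw [hodd _, integral_neg]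
  linarith

lemma integrable_mul_signedLayer [SFinite P] (hX : Measurable X)
    (hX3 : Integrable (fun ω => |X ω| ^ 3) P) :
    Integrable (Function.uncurry fun ω u => X ω * signedLayer (X ω) u) (P.prod volume) := by
  have hmeas : Measurable (Function.uncurry fun ω u => X ω * signedLayer (X ω) u) :=
    (hX.comp measurable_fst).mul
      (measurable_signedLayer.comp ((hX.comp measurable_fst).prodMk measurable_snd))
  refine (integrable_prod_iff hmeas.aestronglyMeasurable).2
    ⟨ae_of_all _ fun ω => (integrable_signedLayer (X ω)).const_mul (X ω), ?_⟩
  simpa only [Function.uncurry_apply_pair, integral_norm_mul_signedLayer] using hX3.div_const 2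

lemma integral_mul_signedLayer (hX : Measurable X) (hX1 : Integrable X P)
    (hmean : ∫ ω, X ω ∂P = 0) (u : ℝ) :
    ∫ ω, X ω * signedLayer (X ω) u ∂P = u * ∫ ω, X ω * (if u ≤ X ω then 1 else 0) ∂P := by
  have hcut : Integrable (fun ω => X ω * (if u ≤ X ω then 1 else 0)) P := by
    refine (hX1.indicator (measurableSet_le (measurable_const (a := u)) hX)).congr
      (ae_of_all _ fun ω => ?_)
    simp [Set.indicator_apply]
  have hsplit : (fun ω => X ω * signedLayer (X ω) u) = fun ω =>
      u * (X ω * (if u ≤ X ω then 1 else 0)) - (u * if u ≤ 0 then 1 else 0) * X ω := by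
    ext ω
    simp only [signedLayer]
    ring
  rw [hsplit, integral_sub (hcut.const_mul u) (hX1.const_mul _), integral_const_mul,
    integral_const_mul, hmean, mul_zero, sub_zero]

end

/-- Let `Z` be a real random variable with `E[Z] = 0` and
`E[|Z|³] < ∞`, and define `ω(u) = E[Z·1{Z ≥ u}]`.  Then `u ↦ u·ω(u)` is Lebesgue
integrable on `ℝ` and `∫_ℝ u·ω(u) du = E[Z³]/2`.  In particular, if `Z` has the same
distribution as `−Z` (symmetric shocks), then `∫_ℝ u·ω(u) du = 0`: a linear local
projection's weighted average annihilates any second-order (quadratic) component of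
the marginal effect. -/
theorem causal_weights_first_moment
    {Ω : Type*} [MeasurableSpace Ω] (P : Measure Ω) [IsProbabilityMeasure P]
    (Z : Ω → ℝ) (hZmeas : Measurable Z)
    (hZ3 : Integrable (fun ω => |Z ω| ^ 3) P)
    (hZmean : ∫ ω, Z ω ∂P = 0) :
    let w : ℝ → ℝ := fun u => ∫ ω, Z ω * (if u ≤ Z ω then (1 : ℝ) else 0) ∂P
    Integrable (fun u => u * w u) (volume : Measure ℝ)
    ∧ (∫ u, u * w u ∂(volume : Measure ℝ)) = (∫ ω, (Z ω) ^ 3 ∂P) / 2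
    ∧ (Measure.map Z P = Measure.map (fun ω => -Z ω) P →
        (∫ u, u * w u ∂(volume : Measure ℝ)) = 0) := by
  intro w
  have hZ1 : Integrable Z P := by
    refine (integrable_norm_iff hZmeas.aestronglyMeasurable).1 ?_
    simpa using integrable_norm_pow_of_le hZmeas.aestronglyMeasurable (p := 1) (q := 3)
      (by norm_num) (by simpa using hZ3)
  have hF := integrable_mul_signedLayer hZmeas hZ3
  have hsection : (fun u => ∫ ω, Z ω * signedLayer (Z ω) u ∂P) = fun u => u * w u :=
    funext (integral_mul_signedLayer hZmeas hZ1 hZmean)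
  have hvalue : ∫ u, u * w u = (∫ ω, Z ω ^ 3 ∂P) / 2 := by
    simp_rw [← hsection, ← integral_integral_swap hF, integral_const_mul, integral_signedLayer]
    rw [← integral_div]
    congr 1 with ω
    ring
  refine ⟨hsection ▸ hF.integral_prod_right, hvalue, fun hsymm => ?_⟩
  have hcube_odd : Function.Odd fun x : ℝ => x ^ 3 := fun x => Odd.neg_pow (by decide) x
  rw [hvalue, hcube_odd.integral_comp_eq_zero_of_map_neg_eq (measurable_id.pow_const 3) hZmeas
    hsymm, zero_div]
end

section
/- Let Y₋ and S₋ be ℝⁿ-valued random vectors with E[S₋] = 0 componentwise, E[‖S₋‖²] < ∞ and E[‖Y₋‖] < ∞, and let U₀, U₁, …, U_h be i.i.d. ℝⁿ-valued random vectors, each with n i.i.d. standard Gaussian components, independent of (Y₋, S₋). Let y_h be produced by the QVAR(1,1) recursion started at s₋₁ = S₋, y₋₁ = Y₋ with inputs u_k = U_k. Then for all indices i, j ∈ {1, …, n}: E[(y_h)_j · (U₀)_i] = (Φ₁^h Σ_tr)_{j i}. That is, the population coefficient of a linear local projection of each outcome on each observed structural shock coincides with the impulse response of the linear VAR(1) model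 y_t = Φ₁ y_{t−1} + Σ_tr u_t, so the linear local projection captures none of the nonlinearity of the QVAR(1,1) model. -/
/-!
Let `V` be the linear span of the coordinates of `S₋` and of all shocks. Every state `s_k` has
coordinates in `V`, so `y_k = Φ₁ y_{k-1} + Σ_tr u_k + N_k` with the quadratic and Hadamard terms
`N_k` in `V · V`. Any element of `V · V` times `(U₀)_i` has mean zero: the monomials
`S S U`, `S U U` and `U U U` factor by independence into a product containing `E[S] = 0` or
`E[U] = 0`, except `E[U³]`, which vanishes by symmetry of the Gaussian. Since moreover
`E[u_k U₀ᵀ] = 0` for `k ≥ 1`, the matrices `E[y_k U₀ᵀ]` obey `E[y_k U₀ᵀ] = Φ₁ E[y_{k-1} U₀ᵀ]`,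
starting from `E[y₀ U₀ᵀ] = Σ_tr` (as `E[Y₋ U₀ᵀ] = 0` and `E[U₀ U₀ᵀ] = I`).
-/

open MeasureTheory ProbabilityTheory

/-- The state process of the QVAR(1,1) recursion:
`s k = Φ₁ s (k-1) + Σtr u k`, started at `s (-1) = sInit`.  Here `Str` plays the role
of the matrix `Σ_tr`. -/
def qvarS {n : ℕ} (Φ1 Str : Matrix (Fin n) (Fin n) ℝ) (sInit : Fin n → ℝ)
    (u : ℕ → Fin n → ℝ) : ℕ → Fin n → ℝ
  | 0 => Φ1.mulVec sInit + Str.mulVec (u 0)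
  | k + 1 => Φ1.mulVec (qvarS Φ1 Str sInit u k) + Str.mulVec (u (k + 1))

/-- The outcome process of the QVAR(1,1) recursion:
`y k = Φ₁ y (k-1) + Q (s (k-1) s (k-1)ᵀ) + (1_n + Γ s (k-1)) ⊙ (Σtr u k)`,
where `Q` is a linear map encoding the quadratic term `Φ₂ · vech(s sᵀ)` and `⊙` is the
entrywise (Hadamard) product; started at `s (-1) = sInit`, `y (-1) = yInit`. -/
def qvarY {n : ℕ} (Φ1 Γ Str : Matrix (Fin n) (Fin n) ℝ)
    (Q : Matrix (Fin n) (Fin n) ℝ →ₗ[ℝ] (Fin n → ℝ))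
    (sInit yInit : Fin n → ℝ) (u : ℕ → Fin n → ℝ) : ℕ → Fin n → ℝ
  | 0 => Φ1.mulVec yInit + Q (Matrix.vecMulVec sInit sInit)
      + fun i => (1 + Γ.mulVec sInit i) * Str.mulVec (u 0) i
  | k + 1 => Φ1.mulVec (qvarY Φ1 Γ Str Q sInit yInit u k)
      + Q (Matrix.vecMulVec (qvarS Φ1 Str sInit u k) (qvarS Φ1 Str sInit u k))
      + fun i => (1 + Γ.mulVec (qvarS Φ1 Str sInit u k) i) * Str.mulVec (u (k + 1)) i

open Matrix

theorem Submodule.mul_mem_of_forall_mul_mul_mem {R A : Type*} [CommSemiring R] [Semiring A]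
    [Algebra R A] {s : Set A} {w f : A} {N : Submodule R A}
    (h : ∀ a ∈ s, ∀ b ∈ s, a * b * w ∈ N) (hf : f ∈ span R s * span R s) : f * w ∈ N := by
  have hle : span R s * span R s * span R {w} ≤ N := by
    rw [span_mul_span, span_mul_span, span_le]
    rintro _ ⟨_, ⟨a, ha, b, hb, rfl⟩, _, rfl, rfl⟩
    exact h a ha b hb
  exact hle (mul_mem_mul hf (subset_span rfl))

section MatrixSpan

variable {Ω m n : Type*} [Fintype n] {V : Submodule ℝ (Ω → ℝ)}

theorem mulVec_apply_mem (M : Matrix m n ℝ) {x : Ω → n → ℝ} (hx : ∀ a, (fun ω => x ω a) ∈ V)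
    (j : m) : (fun ω => (M *ᵥ x ω) j) ∈ V := by
  have : (fun ω => (M *ᵥ x ω) j) = ∑ a, M j a • fun ω => x ω a := by
    ext ω; simp [Matrix.mulVec, dotProduct]
  rw [this]
  exact V.sum_mem fun a _ => V.smul_mem _ (hx a)

theorem mulVec_mul_sub_mulVec_mem (M : Matrix m n ℝ) {x : Ω → n → ℝ} {w : Ω → ℝ} {c : n → ℝ}
    (hx : ∀ a, (fun ω => x ω a * w ω - c a) ∈ V) (j : m) :
    (fun ω => (M *ᵥ x ω) j * w ω - (M *ᵥ c) j) ∈ V := by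
  convert mulVec_apply_mem M (x := fun ω => w ω • x ω - c) (by simpa [mul_comm] using hx) j
    using 2 with ω
  simp [Matrix.mulVec_sub, Matrix.mulVec_smul, mul_comm]

theorem linearMap_vecMulVec_self_apply_mem_mul [DecidableEq n] {ι : Type*}
    (Q : Matrix n n ℝ →ₗ[ℝ] (ι → ℝ)) {x : Ω → n → ℝ} (hx : ∀ a, (fun ω => x ω a) ∈ V)
    (j : ι) : (fun ω => Q (Matrix.vecMulVec (x ω) (x ω)) j) ∈ V * V := by
  have : (fun ω => Q (Matrix.vecMulVec (x ω) (x ω)) j)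
      = ∑ a, ∑ b, Q (Matrix.single a b 1) j • ((fun ω => x ω a) * fun ω => x ω b) := by
    ext ω
    conv_lhs => rw [Matrix.matrix_eq_sum_single (Matrix.vecMulVec (x ω) (x ω))]
    simp only [map_sum, Finset.sum_apply, Pi.smul_apply, Pi.mul_apply,
      smul_eq_mul, Matrix.vecMulVec_apply]
    refine Finset.sum_congr rfl fun a _ => Finset.sum_congr rfl fun b _ => ?_
    rw [← mul_one (x ω a * x ω b), ← smul_eq_mul, ← Matrix.smul_single, map_smul]
    simp [mul_comm]
  rw [this]
  exact Submodule.sum_mem _ fun a _ => Submodule.sum_mem _ fun b _ =>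
    Submodule.smul_mem _ _ (Submodule.mul_mem_mul (hx a) (hx b))

end MatrixSpan

namespace ProbabilityTheory

variable {Ω : Type*} [MeasurableSpace Ω]

/-- `f - c ∈ centeredIntegrable P` records that `f` is integrable with mean `c`; this turns the
moment computations into linear algebra inside one submodule. -/
def centeredIntegrable (P : Measure Ω) : Submodule ℝ (Ω → ℝ) where
  carrier := {f | Integrable f P ∧ ∫ ω, f ω ∂P = 0}
  add_mem' hf hg := ⟨hf.1.add hg.1, by rw [integral_add' hf.1 hg.1, hf.2, hg.2, add_zero]⟩
  zero_mem' := ⟨integrable_zero _ _ _, integral_zero _ _⟩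
  smul_mem' c f hf := ⟨hf.1.smul c, by
    change ∫ ω, c • f ω ∂P = 0
    rw [integral_smul, hf.2, smul_zero]⟩

variable {P : Measure Ω}

theorem integral_eq_of_sub_const_mem_centeredIntegrable [IsProbabilityMeasure P] {f : Ω → ℝ}
    {c : ℝ} (h : (fun ω => f ω - c) ∈ centeredIntegrable P) : ∫ ω, f ω ∂P = c := by
  obtain ⟨hint, hzero⟩ := h
  have hf : Integrable f P := by simpa [sub_eq_add_neg] using hint
  rw [integral_sub hf (integrable_const c), integral_const] at hzero
  simpa [sub_eq_zero] using hzero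

theorem IndepFun.mul_mem_centeredIntegrable {f g : Ω → ℝ} (hfg : IndepFun f g P)
    (hf : Integrable f P) (hg : Integrable g P) (hg₀ : ∫ ω, g ω ∂P = 0) :
    f * g ∈ centeredIntegrable P :=
  ⟨hfg.integrable_mul hf hg, by
    rw [hfg.integral_mul_eq_mul_integral hf.1 hg.1, hg₀, mul_zero]⟩

variable {X : Ω → ℝ}

theorem HasLaw.memLp_of_gaussianReal {μ : ℝ} {v : NNReal} (hX : HasLaw X (gaussianReal μ v) P)
    {p : ENNReal} (hp : p ≠ ⊤) : MemLp X p P := by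
  have := memLp_id_gaussianReal' (μ := μ) (v := v) p hp
  rw [← hX.map_eq, memLp_map_measure_iff (by rw [hX.map_eq]; fun_prop) hX.aemeasurable] at this
  exact this

theorem HasLaw.integrable_pow_of_gaussianReal {μ : ℝ} {v : NNReal}
    (hX : HasLaw X (gaussianReal μ v) P) (k : ℕ) : Integrable (fun ω => X ω ^ k) P := by
  have := integrable_pow_of_mem_interior_integrableExpSet (X := id) (μ := gaussianReal μ v)
    (by simp) k
  rw [← hX.map_eq, integrable_map_measure (by fun_prop) hX.aemeasurable] at this
  exact this

theorem HasLaw.integrable_of_gaussianReal {μ : ℝ} {v : NNReal}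
    (hX : HasLaw X (gaussianReal μ v) P) : Integrable X P :=
  memLp_one_iff_integrable.mp (hX.memLp_of_gaussianReal ENNReal.one_ne_top)

theorem HasLaw.integrable_mul_of_gaussianReal {Y : Ω → ℝ} {μ μ' : ℝ} {v v' : NNReal}
    (hX : HasLaw X (gaussianReal μ v) P) (hY : HasLaw Y (gaussianReal μ' v') P) :
    Integrable (X * Y) P :=
  (hX.memLp_of_gaussianReal (by simp : (2 : ENNReal) ≠ ⊤)).integrable_mul
    (hY.memLp_of_gaussianReal (by simp : (2 : ENNReal) ≠ ⊤))

theorem HasLaw.integral_eq_zero_of_gaussianReal {v : NNReal}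
    (hX : HasLaw X (gaussianReal 0 v) P) : ∫ ω, X ω ∂P = 0 := by
  rw [hX.integral_eq, integral_id_gaussianReal]

theorem HasLaw.integral_mul_self_of_gaussianReal {v : NNReal}
    (hX : HasLaw X (gaussianReal 0 v) P) : ∫ ω, X ω * X ω ∂P = v := by
  rw [← variance_id_gaussianReal (μ := 0) (v := v), ← hX.variance_eq,
    variance_of_integral_eq_zero hX.aemeasurable hX.integral_eq_zero_of_gaussianReal]
  simp [sq]

theorem HasLaw.mul_mul_mem_centeredIntegrable_of_gaussianReal {v : NNReal}
    (hX : HasLaw X (gaussianReal 0 v) P) : X * X * X ∈ centeredIntegrable P := by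
  have hcube : ∀ {Y : Ω → ℝ}, HasLaw Y (gaussianReal 0 v) P →
      ∫ ω, Y ω * Y ω * Y ω ∂P = ∫ x, x * x * x ∂gaussianReal 0 v := fun hY =>
    hY.integral_comp (f := fun x => x * x * x) (by fun_prop)
  have hneg : HasLaw (-X) (gaussianReal 0 v) P := by simpa using gaussianReal_neg hX
  have hsymm := (hcube hneg).trans (hcube hX).symm
  simp only [Pi.neg_apply, neg_mul, mul_neg, neg_neg, integral_neg] at hsymm
  refine ⟨(hX.integrable_pow_of_gaussianReal 3).congr (ae_of_all _ fun ω => ?_), ?_⟩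
  · simp [pow_succ]
  · change ∫ ω, X ω * X ω * X ω ∂P = 0
    linarith

variable {ι : Type*} {ξ : ι → Ω → ℝ}

theorem iIndepFun.mul_sub_ite_mem_centeredIntegrable [IsProbabilityMeasure P] [DecidableEq ι]
    (hξ : ∀ p, HasLaw (ξ p) (gaussianReal 0 1) P) (hind : iIndepFun ξ P) (p q : ι) :
    (fun ω => ξ p ω * ξ q ω - if p = q then 1 else 0) ∈ centeredIntegrable P := by
  by_cases hpq : p = q
  · subst hpq
    have hint : Integrable (fun ω => ξ p ω * ξ p ω) P :=
      (hξ p).integrable_mul_of_gaussianReal (hξ p)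
    rw [if_pos rfl]
    refine ⟨hint.sub (integrable_const 1), ?_⟩
    rw [integral_sub hint (integrable_const 1), (hξ p).integral_mul_self_of_gaussianReal]
    simp
  · simp only [if_neg hpq, sub_zero]
    exact (hind.indepFun hpq).mul_mem_centeredIntegrable (hξ p).integrable_of_gaussianReal
      (hξ q).integrable_of_gaussianReal (hξ q).integral_eq_zero_of_gaussianReal

theorem iIndepFun.mul_mul_mem_centeredIntegrable (hξ : ∀ p, HasLaw (ξ p) (gaussianReal 0 1) P)
    (hind : iIndepFun ξ P) (p q r : ι) : ξ p * ξ q * ξ r ∈ centeredIntegrable P := by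
  -- Unless `p = q = r`, some index occurs once; that factor is centered and independent of the
  -- product of the other two.
  have hsingle : ∀ p q r, p ≠ r → q ≠ r → ξ p * ξ q * ξ r ∈ centeredIntegrable P :=
    fun p q r hpr hqr =>
      IndepFun.mul_mem_centeredIntegrable
        ((hind.indepFun_prodMk₀ (fun s => (hξ s).aemeasurable) p q r hpr hqr).comp
          (φ := fun x : ℝ × ℝ => x.1 * x.2) (ψ := id) (by fun_prop) measurable_id)
        ((hξ p).integrable_mul_of_gaussianReal (hξ q))
        (hξ r).integrable_of_gaussianReal (hξ r).integral_eq_zero_of_gaussianReal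
  by_cases hpr : p = r <;> by_cases hqr : q = r
  · rw [hpr, hqr]
    exact (hξ r).mul_mul_mem_centeredIntegrable_of_gaussianReal
  · rw [hpr, mul_right_comm]
    exact hsingle r r q (Ne.symm hqr) (Ne.symm hqr)
  · rw [hqr, mul_rotate]
    exact hsingle r r p (Ne.symm hpr) (Ne.symm hpr)
  · exact hsingle p q r hpr hqr

end ProbabilityTheory

section QVAR

variable {Ω : Type*} {n : ℕ}

def stateShockSpan (S : Ω → Fin n → ℝ) (U : ℕ → Ω → Fin n → ℝ) : Submodule ℝ (Ω → ℝ) :=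
  Submodule.span ℝ
    (Set.range (fun c ω => S ω c) ∪ Set.range (fun p : ℕ × Fin n => fun ω => U p.1 ω p.2))

variable {S Y : Ω → Fin n → ℝ} {U : ℕ → Ω → Fin n → ℝ}
  (Φ1 Γ Str : Matrix (Fin n) (Fin n) ℝ) (Q : Matrix (Fin n) (Fin n) ℝ →ₗ[ℝ] (Fin n → ℝ))

theorem state_mem_stateShockSpan (c : Fin n) : (fun ω => S ω c) ∈ stateShockSpan S U :=
  Submodule.subset_span (Or.inl ⟨c, rfl⟩)

theorem shock_mem_stateShockSpan (k : ℕ) (c : Fin n) :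
    (fun ω => U k ω c) ∈ stateShockSpan S U :=
  Submodule.subset_span (Or.inr ⟨(k, c), rfl⟩)

theorem qvarS_apply_mem_stateShockSpan (k : ℕ) (a : Fin n) :
    (fun ω => qvarS Φ1 Str (S ω) (fun l => U l ω) k a) ∈ stateShockSpan S U := by
  induction k generalizing a with
  | zero =>
    exact add_mem (mulVec_apply_mem Φ1 state_mem_stateShockSpan a)
      (mulVec_apply_mem Str (shock_mem_stateShockSpan 0) a)
  | succ k ih =>
    exact add_mem (mulVec_apply_mem Φ1 ih a)
      (mulVec_apply_mem Str (shock_mem_stateShockSpan (k + 1)) a)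

theorem quadratic_add_mulVec_mul_mulVec_mem {x : Ω → Fin n → ℝ}
    (hx : ∀ a, (fun ω => x ω a) ∈ stateShockSpan S U) (k : ℕ) (j : Fin n) :
    (fun ω => Q (Matrix.vecMulVec (x ω) (x ω)) j + (Γ *ᵥ x ω) j * (Str *ᵥ U k ω) j)
      ∈ stateShockSpan S U * stateShockSpan S U :=
  add_mem (linearMap_vecMulVec_self_apply_mem_mul Q hx j)
    (Submodule.mul_mem_mul (mulVec_apply_mem Γ hx j)
      (mulVec_apply_mem Str (shock_mem_stateShockSpan k) j))

theorem qvarY_zero_sub_linear_mem_mul (j : Fin n) :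
    (fun ω => qvarY Φ1 Γ Str Q (S ω) (Y ω) (fun l => U l ω) 0 j
        - (Φ1 *ᵥ Y ω) j - (Str *ᵥ U 0 ω) j)
      ∈ stateShockSpan S U * stateShockSpan S U := by
  convert quadratic_add_mulVec_mul_mulVec_mem Γ Str Q state_mem_stateShockSpan 0 j
    using 2 with ω
  simp only [qvarY, Pi.add_apply]
  ring

theorem qvarY_succ_sub_linear_mem_mul (k : ℕ) (j : Fin n) :
    (fun ω => qvarY Φ1 Γ Str Q (S ω) (Y ω) (fun l => U l ω) (k + 1) j
        - (Φ1 *ᵥ qvarY Φ1 Γ Str Q (S ω) (Y ω) (fun l => U l ω) k) j - (Str *ᵥ U (k + 1) ω) j)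
      ∈ stateShockSpan S U * stateShockSpan S U := by
  convert quadratic_add_mulVec_mul_mulVec_mem Γ Str Q
    (qvarS_apply_mem_stateShockSpan Φ1 Str k) (k + 1) j using 2 with ω
  simp only [qvarY, Pi.add_apply]
  ring

end QVAR

section QVARMoments

variable {Ω : Type*} [MeasurableSpace Ω] {P : Measure Ω} {n : ℕ}
  {S Y : Ω → Fin n → ℝ} {U : ℕ → Ω → Fin n → ℝ}

theorem mul_shock_mem_centeredIntegrable_of_mem_mul [IsFiniteMeasure P]
    (hSmean : ∀ c, ∫ ω, S ω c ∂P = 0) (hS2 : MemLp S 2 P)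
    (hU : ∀ p : ℕ × Fin n, HasLaw (fun ω => U p.1 ω p.2) (gaussianReal 0 1) P)
    (hUiid : iIndepFun (fun (p : ℕ × Fin n) ω => U p.1 ω p.2) P)
    (hindep : IndepFun S (fun ω k => U k ω) P) {f : Ω → ℝ}
    (hf : f ∈ stateShockSpan S U * stateShockSpan S U) (r : ℕ × Fin n) :
    f * (fun ω => U r.1 ω r.2) ∈ centeredIntegrable P := by
  have hind : ∀ (φ : (Fin n → ℝ) → ℝ) (ψ : (ℕ → Fin n → ℝ) → ℝ), Measurable φ → Measurable ψ →
      IndepFun (fun ω => φ (S ω)) (fun ω => ψ (fun k => U k ω)) P :=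
    fun _ _ hφ hψ => hindep.comp hφ hψ
  have hSc : ∀ c, MemLp (fun ω => S ω c) 2 P := hS2.eval
  have hUr : Integrable (fun ω => U r.1 ω r.2) P := (hU r).integrable_of_gaussianReal
  have hUU : ∀ (q : ℕ × Fin n) c,
      (fun ω => U q.1 ω q.2) * (fun ω => U r.1 ω r.2) * (fun ω => S ω c)
        ∈ centeredIntegrable P := fun q c =>
    IndepFun.mul_mem_centeredIntegrable
      (hind (fun s => s c) (fun u => u q.1 q.2 * u r.1 r.2) (by fun_prop) (by fun_prop)).symm
      ((hU q).integrable_mul_of_gaussianReal (hU r))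
      ((hSc c).integrable one_le_two) (hSmean c)
  refine Submodule.mul_mem_of_forall_mul_mul_mem ?_ hf
  rintro _ (⟨c, rfl⟩ | ⟨p, rfl⟩) _ (⟨d, rfl⟩ | ⟨q, rfl⟩)
  · exact IndepFun.mul_mem_centeredIntegrable
      (hind (fun s => s c * s d) (fun u => u r.1 r.2) (by fun_prop) (by fun_prop))
      ((hSc c).integrable_mul (hSc d)) hUr (hU r).integral_eq_zero_of_gaussianReal
  · rw [mul_assoc, mul_comm]
    exact hUU q c
  · rw [mul_right_comm]
    exact hUU p d
  · exact hUiid.mul_mul_mem_centeredIntegrable hU p q r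

variable (Φ1 Γ Str : Matrix (Fin n) (Fin n) ℝ) (Q : Matrix (Fin n) (Fin n) ℝ →ₗ[ℝ] (Fin n → ℝ))

theorem qvarY_mul_shock_sub_mem_centeredIntegrable [IsProbabilityMeasure P]
    (hSmean : ∀ c, ∫ ω, S ω c ∂P = 0) (hS2 : MemLp S 2 P) (hYint : Integrable Y P)
    (hU : ∀ p : ℕ × Fin n, HasLaw (fun ω => U p.1 ω p.2) (gaussianReal 0 1) P)
    (hUiid : iIndepFun (fun (p : ℕ × Fin n) ω => U p.1 ω p.2) P)
    (hindepY : IndepFun Y (fun ω k => U k ω) P) (hindepS : IndepFun S (fun ω k => U k ω) P)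
    (i : Fin n) (k : ℕ) (j : Fin n) :
    (fun ω => qvarY Φ1 Γ Str Q (S ω) (Y ω) (fun l => U l ω) k j * U 0 ω i - (Φ1 ^ k * Str) j i)
      ∈ centeredIntegrable P := by
  have hquad := fun {f} hf =>
    mul_shock_mem_centeredIntegrable_of_mem_mul (f := f) hSmean hS2 hU hUiid hindepS hf (0, i)
  induction k generalizing j with
  | zero =>
    have hY : ∀ a, (fun ω => Y ω a * U 0 ω i - (0 : Fin n → ℝ) a) ∈ centeredIntegrable P :=
      fun a => by
        simp only [Pi.zero_apply, sub_zero]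
        exact IndepFun.mul_mem_centeredIntegrable
          (hindepY.comp (φ := fun y : Fin n → ℝ => y a) (ψ := fun u : ℕ → Fin n → ℝ => u 0 i)
            (by fun_prop) (by fun_prop))
          (hYint.eval a) (hU (0, i)).integrable_of_gaussianReal
          (hU (0, i)).integral_eq_zero_of_gaussianReal
    have hU0 : ∀ c, (fun ω => U 0 ω c * U 0 ω i - (Pi.single i 1 : Fin n → ℝ) c)
        ∈ centeredIntegrable P := fun c => by
      simpa [Pi.single_apply] using hUiid.mul_sub_ite_mem_centeredIntegrable hU (0, c) (0, i)
    convert add_mem (add_mem (mulVec_mul_sub_mulVec_mem Φ1 hY j)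
      (hquad (qvarY_zero_sub_linear_mem_mul Φ1 Γ Str Q j)))
      (mulVec_mul_sub_mulVec_mem Str hU0 j) using 1
    funext ω
    simp only [pow_zero, one_mul, Matrix.mulVec_zero, Matrix.mulVec_single_one, Matrix.col_apply,
      Pi.zero_apply, Pi.add_apply, Pi.mul_apply]
    ring
  | succ k ih =>
    have hUk : ∀ c, (fun ω => U (k + 1) ω c * U 0 ω i - (0 : Fin n → ℝ) c)
        ∈ centeredIntegrable P := fun c => by
      simpa using hUiid.mul_sub_ite_mem_centeredIntegrable hU (k + 1, c) (0, i)
    have hconst : (Φ1 ^ (k + 1) * Str) j i = (Φ1 *ᵥ fun a => (Φ1 ^ k * Str) a i) j := by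
      rw [pow_succ', Matrix.mul_assoc, Matrix.mul_apply]
      rfl
    convert add_mem (add_mem (mulVec_mul_sub_mulVec_mem Φ1
        (x := fun ω => qvarY Φ1 Γ Str Q (S ω) (Y ω) (fun l => U l ω) k) (w := fun ω => U 0 ω i)
        (c := fun a => (Φ1 ^ k * Str) a i) ih j)
      (hquad (qvarY_succ_sub_linear_mem_mul Φ1 Γ Str Q k j)))
      (mulVec_mul_sub_mulVec_mem Str hUk j) using 1
    funext ω
    simp only [Pi.add_apply, Pi.mul_apply, Matrix.mulVec_zero, Pi.zero_apply, hconst]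
    ring

end QVARMoments

theorem qvar_linear_lp_fails_general
    {Ω : Type*} [MeasurableSpace Ω] (P : Measure Ω) [IsProbabilityMeasure P]
    (n : ℕ)
    (Φ1 Γ Str : Matrix (Fin n) (Fin n) ℝ)
    (Q : Matrix (Fin n) (Fin n) ℝ →ₗ[ℝ] (Fin n → ℝ))
    (h : ℕ)
    (Ym Sm : Ω → (Fin n → ℝ))
    (hSmean : ∀ i, ∫ ω, Sm ω i ∂P = 0)
    (hS2 : MemLp Sm 2 P)
    (hYint : Integrable Ym P)
    (U : ℕ → Ω → (Fin n → ℝ))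
    (hUmeas : ∀ k, Measurable (U k))
    (hUdist : ∀ k i, Measure.map (fun ω => U k ω i) P = gaussianReal 0 1)
    (hUiid : iIndepFun
      (fun (p : ℕ × Fin n) ω => U p.1 ω p.2) P)
    (hindep : IndepFun (fun ω => (Ym ω, Sm ω)) (fun ω (k : ℕ) => U k ω) P) :
    ∀ i j : Fin n,
      ∫ ω, qvarY Φ1 Γ Str Q (Sm ω) (Ym ω) (fun k => U k ω) h j * U 0 ω i ∂P
        = (Φ1 ^ h * Str) j i := by
  intro i j
  have hU : ∀ p : ℕ × Fin n, HasLaw (fun ω => U p.1 ω p.2) (gaussianReal 0 1) P :=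
    fun p => ⟨by fun_prop, hUdist p.1 p.2⟩
  exact integral_eq_of_sub_const_mem_centeredIntegrable
    (qvarY_mul_shock_sub_mem_centeredIntegrable Φ1 Γ Str Q hSmean hS2 hYint hU hUiid
      (hindep.comp measurable_fst measurable_id) (hindep.comp measurable_snd measurable_id) i h j)

/-- In the QVAR(1,1) model with random initial vectors `(Ym, Sm)`
(`E[Sm] = 0` componentwise, `E[‖Sm‖²] < ∞`, `E[‖Ym‖] < ∞`) and shocks
`U 0, U 1, …` whose components are jointly i.i.d. standard Gaussian and independent of
`(Ym, Sm)`, the population coefficient of a linear local projection of each outcome on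
each observed structural shock satisfies `E[(y_h)_j (U₀)_i] = (Φ₁^h Σ_tr)_{j i}`: it
coincides with the impulse response of the linear VAR(1) model
`y_t = Φ₁ y_{t−1} + Σ_tr u_t`, so the linear local projection captures none of the
nonlinearity of the QVAR(1,1) model. -/
theorem qvar_linear_lp_fails
    {Ω : Type*} [MeasurableSpace Ω] (P : Measure Ω) [IsProbabilityMeasure P]
    (n : ℕ) (hn : 1 ≤ n)
    (Φ1 Γ Str : Matrix (Fin n) (Fin n) ℝ)
    (Q : Matrix (Fin n) (Fin n) ℝ →ₗ[ℝ] (Fin n → ℝ))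
    (h : ℕ) (hh : 1 ≤ h)
    (Ym Sm : Ω → (Fin n → ℝ))
    (hYmeas : Measurable Ym) (hSmeas : Measurable Sm)
    (hSmean : ∀ i, ∫ ω, Sm ω i ∂P = 0)
    (hS2 : MemLp Sm 2 P)
    (hYint : Integrable Ym P)
    (U : ℕ → Ω → (Fin n → ℝ))
    (hUmeas : ∀ k, Measurable (U k))
    (hUdist : ∀ k i, Measure.map (fun ω => U k ω i) P = gaussianReal 0 1)
    (hUiid : iIndepFun
      (fun (p : ℕ × Fin n) ω => U p.1 ω p.2) P)
    (hindep : IndepFun (fun ω => (Ym ω, Sm ω)) (fun ω (k : ℕ) => U k ω) P) :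
    ∀ i j : Fin n,
      ∫ ω, qvarY Φ1 Γ Str Q (Sm ω) (Ym ω) (fun k => U k ω) h j * U 0 ω i ∂P
        = (Φ1 ^ h * Str) j i :=
  qvar_linear_lp_fails_general P n Φ1 Γ Str Q h Ym Sm hSmean hS2 hYint U hUmeas hUdist hUiid hindep
end
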